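/- If I is a countable strongly annihilated ideal of a commutative ring R and r ∈ R \ I, then (I : r) is a countable strongly annihilated ideal. -/

import Mathlib

/-- An ideal `I` is countable strongly annihilated if for each countable subset `S ⊆ I`
and each `b ∉ I` there exists `c` with `c * a = 0` for all `a ∈ S` but `c * b ≠ 0`. -/
def CountableStronglyAnnihilated {R : Type*} [CommRing R] (I : Ideal R) : Prop :=
  ∀ S : Set R, S.Countable → S ⊆ I → ∀ b ∉ I, ∃ c : R, (∀ a ∈ S, c * a = 0) ∧ c * b ≠ 0

/- Apply the property of `I` to the countable set `S * r ⊆ I` and to `b * r ∉ I`;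
if `c` separates them, then `c * r` separates `S` from `b`. -/
theorem stmt2 {R : Type*} [CommRing R] (I : Ideal R) (r : R)
    (hI : CountableStronglyAnnihilated I) :
    CountableStronglyAnnihilated (I.colon (Ideal.span {r})) := by
  intro S hS hSI b hb
  rw [Ideal.mem_colon_span_singleton] at hb
  have hSrI : (· * r) '' S ⊆ I :=
    Set.image_subset_iff.2 fun a ha => Ideal.mem_colon_span_singleton.1 (hSI ha)
  obtain ⟨c, hcS, hcb⟩ := hI _ (hS.image _) hSrI (b * r) hb
  refine ⟨c * r, fun a ha => ?_, ?_⟩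
  · rw [mul_right_comm, mul_assoc]
    exact hcS _ (Set.mem_image_of_mem _ ha)
  · rwa [mul_right_comm, mul_assoc]
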